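/- For 1 ≤ p < 2, the constant B_p = (Γ(p+1)/(2Γ(p/2+1)²))^{1/p} satisfies B_p < 1, and B_1 = 2/π and B_2 = 1. -/

import Mathlib

/-!
`B_p < 1` amounts to `Γ(p+1) < 2 Γ(p/2+1)²`. Subtract from the convex function `log Γ` its chord
through `2` and `3` (where `Γ` takes the values `1` and `2`). The difference
`g = logGammaSubChord` is convex, vanishes at `2` and `3`, and is negative at `5/2` because
`Γ(5/2)² = 9π/16 < 2`. Convexity then makes `g ≤ 0` on `[2, 3]` and `g > 0` on `(0, 2)`, and the inequality is `g(p+1) < 2 g(p/2+1)`.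
-/

/-- B_p = (Γ(p+1)/(2Γ(p/2+1)²))^{1/p} -/
noncomputable def Bp (p : ℝ) : ℝ :=
  (Real.Gamma (p + 1) / (2 * Real.Gamma (p / 2 + 1) ^ 2)) ^ (1/p)

open Real Set

lemma Real.Gamma_three_halves : Gamma (3 / 2) = √π / 2 := by
  have h := Gamma_nat_add_one_add_half 0
  norm_num at h
  rw [← h]

lemma Real.Gamma_five_halves : Gamma (5 / 2) = 3 * √π / 4 := by
  have h := Gamma_nat_add_one_add_half 1
  norm_num at h
  rw [← h]

lemma Real.Gamma_five_halves_sq_lt_two : Gamma (5 / 2) ^ 2 < 2 := by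
  rw [Gamma_five_halves, div_pow, mul_pow, sq_sqrt pi_pos.le]
  linarith [pi_lt_d2]

noncomputable def logGammaSubChord (x : ℝ) : ℝ := log (Gamma x) - (x - 2) * log 2

lemma convexOn_logGammaSubChord : ConvexOn ℝ (Ioi 0) logGammaSubChord := by
  have hchord : ConcaveOn ℝ (Ioi 0) fun x : ℝ => (x - 2) * log 2 :=
    ⟨convex_Ioi 0, fun x _ y _ a b _ _ hab => le_of_eq <| by
      simp only [smul_eq_mul]; linear_combination (-2 * log 2) * hab⟩
  exact convexOn_log_Gamma.sub hchord

lemma logGammaSubChord_two : logGammaSubChord 2 = 0 := by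
  simp [logGammaSubChord]

lemma logGammaSubChord_three : logGammaSubChord 3 = 0 := by
  norm_num [logGammaSubChord]

lemma logGammaSubChord_five_halves_neg : logGammaSubChord (5 / 2) < 0 := by
  have hlog := log_lt_log (by positivity) Gamma_five_halves_sq_lt_two
  rw [log_pow] at hlog
  unfold logGammaSubChord
  push_cast at hlog
  linarith

lemma logGammaSubChord_nonpos {x : ℝ} (h2 : 2 ≤ x) (h3 : x ≤ 3) : logGammaSubChord x ≤ 0 := by
  have h := convexOn_logGammaSubChord.le_on_segment (x := 2) (y := 3) (by norm_num) (by norm_num)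
    (by rw [segment_eq_Icc (by norm_num)]; exact ⟨h2, h3⟩)
  rwa [logGammaSubChord_two, logGammaSubChord_three, max_self] at h

lemma logGammaSubChord_pos {t : ℝ} (h0 : 0 < t) (h2 : t < 2) : 0 < logGammaSubChord t := by
  rw [← logGammaSubChord_two]
  refine convexOn_logGammaSubChord.lt_left_of_right_lt (y := 5 / 2) h0 (by norm_num)
    (by rw [openSegment_eq_Ioo (by linarith)]; exact ⟨h2, by norm_num⟩) ?_
  rw [logGammaSubChord_two]
  exact logGammaSubChord_five_halves_neg

lemma Real.Gamma_add_one_lt_two_mul_Gamma_half_add_one_sq {p : ℝ} (h1 : 1 ≤ p) (h2 : p < 2) :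
    Gamma (p + 1) < 2 * Gamma (p / 2 + 1) ^ 2 := by
  have hg : logGammaSubChord (p + 1) < 2 * logGammaSubChord (p / 2 + 1) := by
    linarith [logGammaSubChord_nonpos (x := p + 1) (by linarith) (by linarith),
      logGammaSubChord_pos (t := p / 2 + 1) (by linarith) (by linarith)]
  rw [← log_lt_log_iff (Gamma_pos_of_pos (by linarith)) (by positivity),
    log_mul two_ne_zero (by positivity), log_pow]
  unfold logGammaSubChord at hg
  push_cast
  linarith

lemma Bp_lt_one {p : ℝ} (h1 : 1 ≤ p) (h2 : p < 2) : Bp p < 1 := by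
  have hden : 0 < 2 * Gamma (p / 2 + 1) ^ 2 := by positivity
  refine rpow_lt_one (div_pos (Gamma_pos_of_pos (by linarith)) hden).le ?_ (by positivity)
  exact (div_lt_one hden).mpr (Gamma_add_one_lt_two_mul_Gamma_half_add_one_sq h1 h2)

lemma Bp_one : Bp 1 = 2 / π := by
  have hπ := pi_pos.ne'
  rw [Bp, show (1 : ℝ) / 2 + 1 = 3 / 2 by norm_num, Gamma_three_halves, div_pow,
    sq_sqrt pi_pos.le, one_add_one_eq_two, Gamma_two, div_one, rpow_one]
  field_simp

lemma Bp_two : Bp 2 = 1 := by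
  norm_num [Bp, Gamma_two]

theorem Bp_properties :
    (∀ p : ℝ, 1 ≤ p → p < 2 → Bp p < 1) ∧ Bp 1 = 2 / Real.pi ∧ Bp 2 = 1 :=
  ⟨fun _ => Bp_lt_one, Bp_one, Bp_two⟩
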